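/- arXiv:1312.3287 — 5 statements merged into one kernel-verified Lean document; each statement's English description precedes it below -/
import Mathlib

section
/- For any probability distribution p on a countable set Z, any α > 1, and any ε ∈ (0,1), the ε-smooth min-entropy of p is at least the Rényi entropy of order α minus (1/(α-1))·log₂(1/ε); i.e., H_min^ε(p) ≥ H_α(p) − (1/(α−1))·log₂(1/ε). -/
/-!
Cap `p` at the level `λ = (∑ p^α / ε)^(1/(α-1))` and pour the removed mass back in below
the cap on finitely many points. The Markov-type bound `p - min p λ ≤ p^α λ^(1-α)` shows that
at most `ε` is moved, so the new distribution is `ε`-close to `p`, and its min-entropy is at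
least `-log₂ λ`, which is the claimed bound. There is room below the cap because, by the
power-mean inequality, a finite set carrying mass more than `ε^(1/α)` has at least `1/λ`
points. The supremum is finite because every distribution `ε`-close to `p`, with `ε < 1`,
keeps mass `(1 - ε)/2` on a fixed finite set.
-/

open Real Finset

section

variable {Z : Type*}

lemma hasSum_of_tsum_eq_of_ne_zero {f : Z → ℝ} {a : ℝ} (h : ∑' z, f z = a) (ha : a ≠ 0) :
    HasSum f a := by
  have hf : Summable f := by
    by_contra hf
    exact ha (h ▸ tsum_eq_zero_of_not_summable hf)
  exact h ▸ hf.hasSum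

section ProbabilityVector

variable {q : Z → ℝ}

lemma le_one_of_hasSum_one (hq0 : ∀ z, 0 ≤ q z) (hq1 : HasSum q 1) (z : Z) : q z ≤ 1 :=
  hq1.tsum_eq ▸ hq1.summable.le_tsum z fun j _ => hq0 j

lemma exists_pos_of_hasSum_one (hq0 : ∀ z, 0 ≤ q z) (hq1 : HasSum q 1) : ∃ z, 0 < q z := by
  by_contra! h
  have hq : q = 0 := funext fun z => le_antisymm (h z) (hq0 z)
  exact one_ne_zero (hq1.unique (hq ▸ hasSum_zero))

lemma le_ciSup_of_hasSum_one (hq0 : ∀ z, 0 ≤ q z) (hq1 : HasSum q 1) (z : Z) :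
    q z ≤ ⨆ z, q z :=
  le_ciSup ⟨1, by rintro _ ⟨z, rfl⟩; exact le_one_of_hasSum_one hq0 hq1 z⟩ z

lemma summable_rpow_of_hasSum_one (hq0 : ∀ z, 0 ≤ q z) (hq1 : HasSum q 1) {α : ℝ}
    (hα : 1 ≤ α) :
    Summable fun z => q z ^ α :=
  hq1.summable.of_nonneg_of_le (fun z => rpow_nonneg (hq0 z) α) fun z =>
    rpow_le_self_of_le_one (hq0 z) (le_one_of_hasSum_one hq0 hq1 z) hα

lemma tsum_rpow_pos_of_hasSum_one (hq0 : ∀ z, 0 ≤ q z) (hq1 : HasSum q 1) {α : ℝ}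
    (hα : 1 ≤ α) :
    0 < ∑' z, q z ^ α :=
  let ⟨z, hz⟩ := exists_pos_of_hasSum_one hq0 hq1
  (summable_rpow_of_hasSum_one hq0 hq1 hα).tsum_pos (fun z => rpow_nonneg (hq0 z) α) z
    (rpow_pos_of_pos hz α)

lemma ciSup_le_of_hasSum_one (hq0 : ∀ z, 0 ≤ q z) (hq1 : HasSum q 1) {c : ℝ}
    (hc : ∀ z, q z ≤ c) :
    ⨆ z, q z ≤ c :=
  have : Nonempty Z := let ⟨z, _⟩ := exists_pos_of_hasSum_one hq0 hq1; ⟨z⟩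
  ciSup_le hc

lemma ciSup_pos_of_hasSum_one (hq0 : ∀ z, 0 ≤ q z) (hq1 : HasSum q 1) : 0 < ⨆ z, q z :=
  let ⟨z, hz⟩ := exists_pos_of_hasSum_one hq0 hq1
  hz.trans_le (le_ciSup_of_hasSum_one hq0 hq1 z)

end ProbabilityVector

lemma sum_sub_le_half_tsum_abs_sub {p q : Z → ℝ} {a : ℝ} (hp : HasSum p a) (hq : HasSum q a)
    (s : Finset Z) : ∑ z ∈ s, (p z - q z) ≤ (1 / 2) * ∑' z, |p z - q z| := by
  have hd : HasSum (fun z => p z - q z) 0 := sub_self a ▸ hp.sub hq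
  have habs : Summable fun z => |p z - q z| := hd.summable.abs
  calc ∑ z ∈ s, (p z - q z) ≤ ∑ z ∈ s, (p z - q z + |p z - q z|) / 2 :=
        sum_le_sum fun z _ => by linarith [le_abs_self (p z - q z)]
    _ ≤ ∑' z, (p z - q z + |p z - q z|) / 2 :=
        ((hd.summable.add habs).div_const 2).sum_le_tsum s fun z _ => by
          linarith [neg_abs_le (p z - q z)]
    _ = (1 / 2) * ∑' z, |p z - q z| := by
        rw [tsum_div_const, hd.summable.tsum_add habs, hd.tsum_eq]; ring

lemma exists_pos_le_ciSup_of_tvDist_le {p : Z → ℝ} (hp1 : HasSum p 1) {ε : ℝ}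
    (hε : ε < 1) :
    ∃ δ > 0, ∀ q : Z → ℝ, (∀ z, 0 ≤ q z) → HasSum q 1 →
      (1 / 2) * ∑' z, |p z - q z| ≤ ε → δ ≤ ⨆ z, q z := by
  obtain ⟨s, hs⟩ : ∃ s : Finset Z, (1 + ε) / 2 < ∑ z ∈ s, p z :=
    (hp1.eventually (eventually_gt_nhds (by linarith))).exists
  -- `#s + 1` keeps `δ` positive even when `s = ∅`
  set δ := (1 - ε) / (2 * (#s + 1)) with hδdef
  have hδ : 0 < δ := div_pos (by linarith) (by positivity)
  refine ⟨δ, hδ, fun q hq0 hq1 hTV => ?_⟩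
  have hsq : (1 - ε) / 2 ≤ ∑ z ∈ s, q z := by
    have := sum_sub_le_half_tsum_abs_sub hp1 hq1 s
    rw [sum_sub_distrib] at this
    linarith
  obtain ⟨z, -, hz⟩ : ∃ z ∈ s, δ < q z := by
    refine exists_lt_of_sum_lt (hsq.trans_lt' ?_)
    rw [sum_const, nsmul_eq_mul, hδdef, mul_div_assoc', div_lt_div_iff₀ (by positivity) two_pos]
    nlinarith
  exact hz.le.trans (le_ciSup_of_hasSum_one hq0 hq1 z)

lemma bddAbove_neg_logb_ciSup_of_tvDist_le {p : Z → ℝ} (hp1 : HasSum p 1) {ε : ℝ}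
    (hε : ε < 1) :
    BddAbove {x : ℝ | ∃ q : Z → ℝ, (∀ z, 0 ≤ q z) ∧ (∑' z, q z = 1) ∧
        (1/2) * (∑' z, |p z - q z|) ≤ ε ∧ x = -Real.logb 2 (⨆ z, q z)} := by
  obtain ⟨δ, hδ, hle⟩ := exists_pos_le_ciSup_of_tvDist_le hp1 hε
  refine ⟨-logb 2 δ, ?_⟩
  rintro _ ⟨q, hq0, hq1, hTV, rfl⟩
  exact neg_le_neg <| logb_le_logb_of_le one_lt_two hδ <|
    hle q hq0 (hasSum_of_tsum_eq_of_ne_zero hq1 one_ne_zero) hTV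

lemma exists_hasSum_le_of_le_sum {c : Z → ℝ} (hc : ∀ z, 0 ≤ c z) {s : Finset Z} {m : ℝ}
    (hm0 : 0 ≤ m) (hm : m ≤ ∑ z ∈ s, c z) :
    ∃ e : Z → ℝ, (∀ z, 0 ≤ e z ∧ e z ≤ c z) ∧ HasSum e m := by
  classical
  set t := m / ∑ z ∈ s, c z
  have hsum : 0 ≤ ∑ z ∈ s, c z := sum_nonneg fun z _ => hc z
  have ht1 : t ≤ 1 := div_le_one_of_le₀ hm hsum
  refine ⟨fun z => if z ∈ s then t * c z else 0, fun z => ?_, ?_⟩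
  · dsimp only
    split_ifs
    · exact ⟨mul_nonneg (div_nonneg hm0 hsum) (hc z), mul_le_of_le_one_left (hc z) ht1⟩
    · exact ⟨le_rfl, hc z⟩
  · have hfin : HasSum (fun z => if z ∈ s then t * c z else 0)
        (∑ z ∈ s, if z ∈ s then t * c z else 0) :=
      hasSum_sum_of_ne_finset_zero fun z hz => if_neg hz
    convert hfin using 1
    rw [sum_ite_of_true fun _ hz => hz, ← mul_sum]
    -- if the capacity on `s` vanishes then so does `m`, and `t = m / 0 = 0`
    rcases hsum.eq_or_lt with h | h
    · rw [← h, mul_zero]; linarith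
    · exact (div_mul_cancel₀ m h.ne').symm

lemma exists_capped_of_one_le_card_mul {p : Z → ℝ} (hp : ∀ z, 0 ≤ p z) (hp1 : HasSum p 1)
    {lam : ℝ} (hlam : 0 ≤ lam) {s : Finset Z} (hs : 1 ≤ #s * lam) :
    ∃ q : Z → ℝ, (∀ z, 0 ≤ q z) ∧ HasSum q 1 ∧ (∀ z, q z ≤ lam) ∧
      ∑' z, |p z - q z| ≤ 2 * ∑' z, (p z - min (p z) lam) := by
  have hmin : Summable fun z => min (p z) lam :=
    hp1.summable.of_nonneg_of_le (fun z => le_min (hp z) hlam) fun z => min_le_left _ _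
  set m := 1 - ∑' z, min (p z) lam
  have hexcess : HasSum (fun z => p z - min (p z) lam) m := hp1.sub hmin.hasSum
  have hcap : m ≤ ∑ z ∈ s, (lam - min (p z) lam) := by
    rw [sum_sub_distrib, sum_const, nsmul_eq_mul]
    linarith [hmin.sum_le_tsum s fun z _ => le_min (hp z) hlam]
  obtain ⟨e, he, hesum⟩ := exists_hasSum_le_of_le_sum (fun z => sub_nonneg.2 (min_le_right _ _))
    (hexcess.nonneg fun z => sub_nonneg.2 (min_le_left _ _)) hcap
  refine ⟨fun z => min (p z) lam + e z, fun z => add_nonneg (le_min (hp z) hlam) (he z).1,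
    by simpa [m] using hmin.hasSum.add hesum, fun z => by linarith [(he z).2], ?_⟩
  have hbound : ∀ z, |p z - (min (p z) lam + e z)| ≤ (p z - min (p z) lam) + e z := fun z =>
    abs_le.2 ⟨by linarith [(he z).1, min_le_left (p z) lam],
      by linarith [(he z).1, min_le_left (p z) lam]⟩
  have hsum := (hexcess.add hesum).summable
  calc ∑' z, |p z - (min (p z) lam + e z)| ≤ ∑' z, ((p z - min (p z) lam) + e z) :=
        (hsum.of_nonneg_of_le (fun z => abs_nonneg _) hbound).tsum_le_tsum hbound hsum
    _ = 2 * ∑' z, (p z - min (p z) lam) := by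
        rw [(hexcess.add hesum).tsum_eq, hexcess.tsum_eq]; ring

lemma exists_finset_lt_card_rpow_mul_tsum_rpow {p : Z → ℝ} (hp : ∀ z, 0 ≤ p z)
    (hp1 : HasSum p 1) {α ε : ℝ} (hα : 1 ≤ α) (hε : ε < 1) :
    ∃ s : Finset Z, ε < (#s : ℝ) ^ (α - 1) * ∑' z, p z ^ α := by
  have hlim := hp1.rpow_const (p := α) (Or.inr (by linarith))
  rw [one_rpow] at hlim
  obtain ⟨s, hs⟩ := (hlim.eventually (eventually_gt_nhds hε)).exists
  refine ⟨s, hs.trans_le ?_⟩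
  calc (∑ z ∈ s, p z) ^ α ≤ #s ^ (α - 1) * ∑ z ∈ s, p z ^ α :=
        rpow_sum_le_const_mul_sum_rpow_of_nonneg s hα fun z _ => hp z
    _ ≤ #s ^ (α - 1) * ∑' z, p z ^ α := by
        gcongr
        exact (summable_rpow_of_hasSum_one hp hp1 hα).sum_le_tsum s fun z _ =>
          rpow_nonneg (hp z) α

lemma sub_min_le_rpow_mul_rpow {x lam α : ℝ} (hx : 0 ≤ x) (hlam : 0 < lam) (hα : 1 ≤ α) :
    x - min x lam ≤ x ^ α * lam ^ (1 - α) := by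
  rcases le_total x lam with h | h
  · rw [min_eq_left h, sub_self]; positivity
  · have hx' : 0 < x := hlam.trans_le h
    have hfactor : 1 ≤ (x / lam) ^ (α - 1) :=
      one_le_rpow ((one_le_div hlam).2 h) (by linarith)
    have hsplit : x ^ α * lam ^ (1 - α) = x * (x / lam) ^ (α - 1) := by
      rw [div_rpow hx hlam.le, rpow_sub_one hx'.ne', show 1 - α = -(α - 1) by ring,
        rpow_neg hlam.le]
      field_simp
    rw [min_eq_right h, hsplit]
    nlinarith

lemma tsum_sub_min_le_rpow_mul_tsum_rpow {p : Z → ℝ} (hp : ∀ z, 0 ≤ p z) {α lam : ℝ}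
    (hpα : Summable fun z => p z ^ α) (hlam : 0 < lam) (hα : 1 ≤ α) :
    ∑' z, (p z - min (p z) lam) ≤ lam ^ (1 - α) * ∑' z, p z ^ α := by
  have hle := fun z => sub_min_le_rpow_mul_rpow (hp z) hlam hα
  have hmaj := hpα.mul_right (lam ^ (1 - α))
  rw [← tsum_mul_left]
  simp_rw [mul_comm (lam ^ (1 - α))]
  exact (hmaj.of_nonneg_of_le (fun z => sub_nonneg.2 (min_le_left _ _)) hle).tsum_le_tsum hle hmaj

lemma exists_finset_one_le_card_mul {p : Z → ℝ} (hp : ∀ z, 0 ≤ p z) (hp1 : HasSum p 1)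
    {α ε lam : ℝ} (hα : 1 < α) (hε0 : 0 < ε) (hε1 : ε < 1) (hlam : 0 < lam)
    (hlamα : lam ^ (α - 1) = (∑' z, p z ^ α) / ε) :
    ∃ s : Finset Z, 1 ≤ #s * lam := by
  obtain ⟨s, hs⟩ := exists_finset_lt_card_rpow_mul_tsum_rpow hp hp1 hα.le hε1
  refine ⟨s, le_of_not_gt fun h => hs.not_ge ?_⟩
  have := rpow_le_one (by positivity) h.le (by linarith : 0 ≤ α - 1)
  rwa [mul_rpow (by positivity) hlam.le, hlamα, ← mul_div_assoc, div_le_one hε0] at this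

lemma exists_tvDist_le_forall_le_rpow {p : Z → ℝ} (hp : ∀ z, 0 ≤ p z) (hp1 : HasSum p 1)
    {α ε : ℝ} (hα : 1 < α) (hε0 : 0 < ε) (hε1 : ε < 1) :
    ∃ q : Z → ℝ, (∀ z, 0 ≤ q z) ∧ HasSum q 1 ∧
      (1 / 2) * ∑' z, |p z - q z| ≤ ε ∧
      ∀ z, q z ≤ ((∑' z, p z ^ α) / ε) ^ (1 / (α - 1)) := by
  set A := ∑' z, p z ^ α
  have hA : 0 < A := tsum_rpow_pos_of_hasSum_one hp hp1 hα.le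
  set lam := (A / ε) ^ (1 / (α - 1)) with hlam_def
  have hlam : 0 < lam := by positivity
  have hlamα : lam ^ (α - 1) = A / ε := by
    rw [hlam_def, one_div, rpow_inv_rpow (by positivity) (by linarith)]
  obtain ⟨s, hs⟩ := exists_finset_one_le_card_mul hp hp1 hα hε0 hε1 hlam hlamα
  obtain ⟨q, hq0, hq1, hqlam, hTV⟩ := exists_capped_of_one_le_card_mul hp hp1 hlam.le hs
  have hexcess : ∑' z, (p z - min (p z) lam) ≤ lam ^ (1 - α) * A :=
    tsum_sub_min_le_rpow_mul_tsum_rpow hp (summable_rpow_of_hasSum_one hp hp1 hα.le) hlam hα.le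
  have hlamA : lam ^ (1 - α) * A = ε := by
    rw [show 1 - α = -(α - 1) by ring, rpow_neg hlam.le, hlamα]
    field_simp
  exact ⟨q, hq0, hq1, by linarith, hqlam⟩

lemma neg_logb_rpow_div {A ε α : ℝ} (hA : 0 < A) (hε : 0 < ε) (hα : α ≠ 1) :
    -logb 2 ((A / ε) ^ (1 / (α - 1))) =
      (1 / (1 - α)) * logb 2 A - (1 / (α - 1)) * logb 2 (1 / ε) := by
  have : α - 1 ≠ 0 := sub_ne_zero.2 hα
  rw [logb_rpow_eq_mul_logb_of_pos (by positivity), logb_div hA.ne' hε.ne', one_div ε,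
    logb_inv, show 1 - α = -(α - 1) by ring]
  field_simp
  ring

end

theorem smooth_min_entropy_ge_renyi_general
    {Z : Type*}
    (p : Z → ℝ) (hp : ∀ z, 0 ≤ p z) (hp1 : ∑' z, p z = 1)
    (α : ℝ) (hα : 1 < α) (ε : ℝ) (hε : ε ∈ Set.Ioo (0 : ℝ) 1) :
    sSup {x : ℝ | ∃ q : Z → ℝ, (∀ z, 0 ≤ q z) ∧ (∑' z, q z = 1) ∧
        (1/2) * (∑' z, |p z - q z|) ≤ ε ∧ x = -Real.logb 2 (⨆ z, q z)}
      ≥ (1/(1-α)) * Real.logb 2 (∑' z, (p z) ^ α)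
        - (1/(α-1)) * Real.logb 2 (1/ε) := by
  obtain ⟨hε0, hε1⟩ := hε
  replace hp1 : HasSum p 1 := hasSum_of_tsum_eq_of_ne_zero hp1 one_ne_zero
  have hA := tsum_rpow_pos_of_hasSum_one hp hp1 hα.le
  obtain ⟨q, hq0, hq1, hTV, hqlam⟩ := exists_tvDist_le_forall_le_rpow hp hp1 hα hε0 hε1
  rw [ge_iff_le, ← neg_logb_rpow_div hA hε0 hα.ne']
  calc -logb 2 (((∑' z, p z ^ α) / ε) ^ (1 / (α - 1))) ≤ -logb 2 (⨆ z, q z) :=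
        neg_le_neg <| logb_le_logb_of_le one_lt_two
          (ciSup_pos_of_hasSum_one hq0 hq1) (ciSup_le_of_hasSum_one hq0 hq1 hqlam)
    _ ≤ _ := le_csSup (bddAbove_neg_logb_ciSup_of_tvDist_le hp1 hε1)
        ⟨q, hq0, hq1.tsum_eq, hTV, rfl⟩

/-- For any probability distribution `p` on a countable set `Z`, any `α > 1`,
and any `ε ∈ (0,1)`, the `ε`-smooth min-entropy of `p` is at least the Rényi entropy of
order `α` minus `(1/(α-1)) * log₂ (1/ε)`. Here the min-entropy of `q` is
`-log₂ (⨆ z, q z)`, the Rényi entropy of order `α` is `(1/(1-α)) * log₂ (∑' z, (p z)^α)`,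
and the smooth min-entropy is the supremum of min-entropies of distributions within total
variation distance `ε` of `p`. -/
theorem smooth_min_entropy_ge_renyi
    {Z : Type*} [Countable Z] [Nonempty Z]
    (p : Z → ℝ) (hp : ∀ z, 0 ≤ p z) (hp1 : ∑' z, p z = 1)
    (α : ℝ) (hα : 1 < α) (ε : ℝ) (hε : ε ∈ Set.Ioo (0 : ℝ) 1) :
    sSup {x : ℝ | ∃ q : Z → ℝ, (∀ z, 0 ≤ q z) ∧ (∑' z, q z = 1) ∧
        (1/2) * (∑' z, |p z - q z|) ≤ ε ∧ x = -Real.logb 2 (⨆ z, q z)}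
      ≥ (1/(1-α)) * Real.logb 2 (∑' z, (p z) ^ α)
        - (1/(α-1)) * Real.logb 2 (1/ε) :=
  smooth_min_entropy_ge_renyi_general p hp hp1 α hα ε hε
end

section
/- Let p be a probability distribution on a countable set, α > 1, ε ∈ (0,1), and c a real number such that ∑_{z : p(z) ≥ c} p(z) ≥ ε. Then ∑_z p(z)^α ≥ c^{α−1}·ε, and consequently −log₂ c ≥ (1/(1−α))·log₂(∑_z p(z)^α) − (1/(α−1))·log₂(1/ε). -/
/-- Let `p` be a probability distribution on a countable set, `α > 1`,
`ε ∈ (0,1)`, and `c > 0` a real number such that `∑_{z : p z ≥ c} p z ≥ ε`. Then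
`∑_z (p z)^α ≥ c^(α-1) * ε`, and consequently
`-log₂ c ≥ (1/(1-α)) * log₂ (∑_z (p z)^α) - (1/(α-1)) * log₂ (1/ε)`. -/
theorem renyi_tail_bound
    {Z : Type*} [Countable Z]
    (p : Z → ℝ) (hp : ∀ z, 0 ≤ p z) (hp1 : ∑' z, p z = 1)
    (α : ℝ) (hα : 1 < α) (ε : ℝ) (hε : ε ∈ Set.Ioo (0 : ℝ) 1)
    (c : ℝ) (hc : 0 < c)
    (htail : ∑' z, (if c ≤ p z then p z else 0) ≥ ε) :
    (∑' z, (p z) ^ α ≥ c ^ (α - 1) * ε) ∧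
    (-Real.logb 2 c ≥ (1/(1-α)) * Real.logb 2 (∑' z, (p z) ^ α)
        - (1/(α-1)) * Real.logb 2 (1/ε)) := by
  obtain ⟨hε0, hε1⟩ := hε
  have hα1 : (0:ℝ) < α - 1 := by linarith
  have hps : Summable p := by
    by_contra h
    rw [tsum_eq_zero_of_not_summable h] at hp1
    norm_num at hp1
  have hple : ∀ z, p z ≤ 1 := by
    intro z; rw [← hp1]; exact Summable.le_tsum hps z (fun i _ => hp i)
  have hpow_nonneg : ∀ z, 0 ≤ (p z) ^ α := fun z => Real.rpow_nonneg (hp z) α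
  have hpow_le : ∀ z, (p z) ^ α ≤ p z := by
    intro z
    rcases eq_or_lt_of_le (hp z) with h | h
    · rw [← h, Real.zero_rpow (by linarith : α ≠ 0)]
    · calc (p z) ^ α ≤ (p z) ^ (1:ℝ) :=
            Real.rpow_le_rpow_of_exponent_ge h (hple z) hα.le
        _ = p z := Real.rpow_one _
  have hsum_pow : Summable (fun z => (p z) ^ α) :=
    Summable.of_nonneg_of_le hpow_nonneg hpow_le hps
  have hsum_tail : Summable (fun z => if c ≤ p z then p z else 0) := by
    refine Summable.of_nonneg_of_le (fun z => ?_) (fun z => ?_) hps <;> split <;> simp [hp z]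
  have hterm : ∀ z, c ^ (α - 1) * (if c ≤ p z then p z else 0) ≤ (p z) ^ α := by
    intro z
    split
    · rename_i h
      have hpz : 0 < p z := lt_of_lt_of_le hc h
      have h1 : c ^ (α - 1) ≤ (p z) ^ (α - 1) :=
        Real.rpow_le_rpow hc.le h (by linarith)
      calc c ^ (α - 1) * p z ≤ (p z) ^ (α - 1) * p z :=
            mul_le_mul_of_nonneg_right h1 (hp z)
        _ = (p z) ^ α := by
            rw [← Real.rpow_add_one hpz.ne' (α - 1)]; ring_nf
    · simpa using hpow_nonneg z
  have hmul : Summable (fun z => c ^ (α - 1) * (if c ≤ p z then p z else 0)) :=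
    hsum_tail.mul_left _
  have key : c ^ (α - 1) * ε ≤ ∑' z, (p z) ^ α := by
    calc c ^ (α - 1) * ε ≤ c ^ (α - 1) * ∑' z, (if c ≤ p z then p z else 0) :=
          mul_le_mul_of_nonneg_left htail (Real.rpow_nonneg hc.le _)
      _ = ∑' z, c ^ (α - 1) * (if c ≤ p z then p z else 0) := (tsum_mul_left).symm
      _ ≤ ∑' z, (p z) ^ α := Summable.tsum_le_tsum hterm hmul hsum_pow
  refine ⟨key, ?_⟩
  have hcε : 0 < c ^ (α - 1) * ε := mul_pos (Real.rpow_pos_of_pos hc _) hε0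
  have hS : 0 < ∑' z, (p z) ^ α := lt_of_lt_of_le hcε key
  have hlog : Real.logb 2 (c ^ (α - 1) * ε) ≤ Real.logb 2 (∑' z, (p z) ^ α) :=
    Real.logb_le_logb_of_le one_lt_two hcε key
  rw [Real.logb_mul (by positivity) hε0.ne', Real.logb_rpow_eq_mul_logb_of_pos hc] at hlog
  rw [one_div ε, Real.logb_inv]
  set Lc := Real.logb 2 c
  set Lε := Real.logb 2 ε
  set LS := Real.logb 2 (∑' z, (p z) ^ α)
  have h1α : (1:ℝ) - α ≠ 0 := by linarith
  have heq : 1/(1-α) * LS - 1/(α-1) * (-Lε) = (Lε - LS)/(α-1) := by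
    field_simp
    ring
  rw [ge_iff_le, heq, div_le_iff₀ hα1]
  nlinarith [hlog]
end

section
/- The number of tuples (a₁,…,aₙ) of nonnegative integers with ∑ᵢ aᵢ ≤ ⌈n·N_S⌉ is at most 2^{n[g(N_S) + δ]}, where g(x) = (x+1)·log₂(x+1) − x·log₂(x) and δ ≥ (1/n)·(log₂ e + log₂(1 + 1/N_S)), for any real N_S > 0 and positive integer n. -/
/-!
Adding a slack coordinate identifies the tuples with the multisets of size `k = ⌈n N_S⌉` on
`n + 1` letters, so there are exactly `C(n + k, k)` of them. The binomial theorem gives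
`C(n + k, k) kᵏ nⁿ ≤ (n + k)ⁿ⁺ᵏ`, i.e. `C(n + k, k) ≤ 2^(n g(k/n))`. Finally `g` is concave with
`g'(x) = log₂(1 + 1/x)`, and `0 ≤ k/n - N_S ≤ 1/n`, so `n g(k/n) ≤ n g(N_S) + log₂(1 + 1/N_S)`.
-/

open Real

/-- The entropy of a bosonic thermal state with mean photon number `x`:
`g(x) = (x+1)·log₂(x+1) − x·log₂ x`. -/
noncomputable def gthermal (x : ℝ) : ℝ :=
  (x + 1) * Real.logb 2 (x + 1) - x * Real.logb 2 x

def sumLeEquivSumEq (n k : ℕ) :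
    {a : Fin n → ℕ // ∑ i, a i ≤ k} ≃ {b : Fin (n + 1) → ℕ // ∑ i, b i = k} where
  toFun a := ⟨Fin.cons (k - ∑ i, a.1 i) a.1, by rw [Fin.sum_cons]; have := a.2; omega⟩
  invFun b := ⟨Fin.tail b.1, by
    have := b.2
    rw [Fin.sum_univ_succ] at this
    unfold Fin.tail
    omega⟩
  left_inv a := by simp
  right_inv := by
    rintro ⟨b, hb⟩
    rw [Fin.sum_univ_succ] at hb
    ext i
    cases i using Fin.cases with
    | zero => simp only [Fin.cons_zero, Fin.tail]; omega
    | succ i => rfl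

theorem natCard_sum_le_eq_choose (n k : ℕ) :
    Nat.card {a : Fin n → ℕ // ∑ i, a i ≤ k} = (n + k).choose k := by
  rw [Nat.card_congr ((sumLeEquivSumEq n k).trans (Sym.equivNatSumOfFintype (Fin (n + 1)) k).symm),
    Sym.natCard_sym_eq_choose, Nat.card_eq_fintype_card, Fintype.card_fin, Nat.add_right_comm,
    Nat.add_sub_cancel]

theorem choose_mul_pow_mul_pow_le_add_pow {R : Type*} [CommSemiring R] [PartialOrder R]
    [IsOrderedRing R] {x y : R} (hx : 0 ≤ x) (hy : 0 ≤ y) (m j : ℕ) :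
    (m.choose j : R) * x ^ j * y ^ (m - j) ≤ (x + y) ^ m := by
  rcases le_or_gt j m with hjm | hmj
  · rw [add_pow, mul_rotate]
    exact Finset.single_le_sum (f := fun i => x ^ i * y ^ (m - i) * (m.choose i : R))
      (fun i _ => by positivity) (Finset.mem_range_succ_iff.2 hjm)
  · rw [Nat.choose_eq_zero_of_lt hmj, Nat.cast_zero, zero_mul, zero_mul]
    positivity

theorem mul_gthermal_div {m k : ℝ} (hm : 0 < m) (hk : 0 < k) :
    m * gthermal (k / m) = logb 2 ((m + k) ^ (m + k) / (k ^ k * m ^ m)) := by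
  have hmk : k / m + 1 = (m + k) / m := by field_simp; ring
  have hmk' : 0 < m + k := by positivity
  rw [gthermal, hmk, logb_div hmk'.ne' hm.ne', logb_div hk.ne' hm.ne',
    logb_div (by positivity) (by positivity), logb_mul (by positivity) (by positivity),
    logb_rpow_eq_mul_logb_of_pos hmk', logb_rpow_eq_mul_logb_of_pos hk,
    logb_rpow_eq_mul_logb_of_pos hm]
  field_simp
  ring

theorem choose_le_two_rpow_mul_gthermal {n k : ℕ} (hn : 0 < n) (hk : 0 < k) :
    ((n + k).choose k : ℝ) ≤ 2 ^ ((n : ℝ) * gthermal (k / n)) := by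
  have hnR : (0 : ℝ) < n := Nat.cast_pos.2 hn
  have hkR : (0 : ℝ) < k := Nat.cast_pos.2 hk
  rw [mul_gthermal_div hnR hkR, rpow_logb two_pos (by norm_num) (by positivity),
    le_div_iff₀ (by positivity), ← mul_assoc]
  have := choose_mul_pow_mul_pow_le_add_pow hkR.le hnR.le (n + k) k
  simp only [Nat.add_sub_cancel, add_comm (k : ℝ)] at this
  exact_mod_cast this

/-- The log-sum inequality for two terms. -/
theorem add_mul_log_div_add_le {x y a b : ℝ} (hx : 0 ≤ x) (hy : 0 ≤ y) (ha : 0 < a)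
    (hb : 0 < b) :
    (x + y) * log ((x + y) / (a + b)) ≤ x * log (x / a) + y * log (y / b) := by
  have hab : 0 < a + b := by positivity
  have h := convexOn_mul_log.2 (x := x / a) (y := y / b) (div_nonneg hx ha.le)
    (div_nonneg hy hb.le) (div_nonneg ha.le hab.le) (div_nonneg hb.le hab.le)
    (by field_simp)
  have hmix : a / (a + b) * (x / a) + b / (a + b) * (y / b) = (x + y) / (a + b) := by
    field_simp
  simp only [smul_eq_mul, hmix] at h
  calc (x + y) * log ((x + y) / (a + b))
      = (a + b) * ((x + y) / (a + b) * log ((x + y) / (a + b))) := by field_simp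
    _ ≤ (a + b) * (a / (a + b) * (x / a * log (x / a)) + b / (a + b) * (y / b * log (y / b))) :=
      mul_le_mul_of_nonneg_left h hab.le
    _ = x * log (x / a) + y * log (y / b) := by field_simp

theorem gthermal_le_add_mul_logb {a x : ℝ} (ha : 0 < a) (hx : 0 < x) :
    gthermal x ≤ gthermal a + (x - a) * logb 2 (1 + 1 / a) := by
  -- The gap between the two sides is `(x log(x/a) - (x+1) log((x+1)/(a+1))) / log 2`.
  have h := add_mul_log_div_add_le hx.le zero_le_one ha one_pos
  rw [div_one, log_one, mul_zero, add_zero, log_div (by positivity) (by positivity),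
    log_div hx.ne' ha.ne'] at h
  have hlog2 : 0 < log 2 := log_pos one_lt_two
  have h1a : 1 + 1 / a = (a + 1) / a := by field_simp
  rw [gthermal, gthermal, h1a]
  simp only [logb]
  rw [log_div (by positivity) ha.ne']
  field_simp
  linarith

/-- The number of tuples `(a₁,…,aₙ)` of nonnegative integers with
`∑ i, a i ≤ ⌈n·N_S⌉` is at most `2^(n(g(N_S)+δ))`, provided
`δ ≥ (1/n)(log₂ e + log₂(1 + 1/N_S))`. -/
theorem photon_number_projector_rank_bound
    (n : ℕ) (hn : 0 < n) (NS : ℝ) (hNS : 0 < NS) (δ : ℝ)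
    (hδ : δ ≥ (1 / (n : ℝ)) * (Real.logb 2 (Real.exp 1) + Real.logb 2 (1 + 1 / NS))) :
    (Nat.card {a : Fin n → ℕ // ∑ i, a i ≤ ⌈(n : ℝ) * NS⌉₊} : ℝ)
      ≤ (2 : ℝ) ^ ((n : ℝ) * (gthermal NS + δ)) := by
  set k := ⌈(n : ℝ) * NS⌉₊
  have hnR : (0 : ℝ) < n := Nat.cast_pos.2 hn
  have hk : 0 < k := Nat.ceil_pos.2 (by positivity)
  have hNS_le : NS ≤ k / n := by
    rw [le_div_iff₀ hnR, mul_comm]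
    exact Nat.le_ceil _
  have hn_mul_le : (n : ℝ) * (k / n - NS) ≤ 1 := by
    rw [mul_sub, mul_div_cancel₀ _ hnR.ne']
    linarith [Nat.ceil_lt_add_one (by positivity : 0 ≤ (n : ℝ) * NS)]
  have hL : 0 ≤ logb 2 (1 + 1 / NS) := logb_nonneg one_lt_two (by simp [hNS.le])
  have he : 0 ≤ logb 2 (exp 1) := logb_nonneg one_lt_two (one_le_exp zero_le_one)
  have hδn : logb 2 (exp 1) + logb 2 (1 + 1 / NS) ≤ n * δ := by
    rwa [ge_iff_le, one_div_mul_eq_div, div_le_iff₀' hnR] at hδ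
  have hg := mul_le_mul_of_nonneg_left
    (gthermal_le_add_mul_logb hNS (hNS.trans_le hNS_le)) hnR.le
  have hslack : (n : ℝ) * ((k / n - NS) * logb 2 (1 + 1 / NS)) ≤ logb 2 (1 + 1 / NS) := by
    rw [← mul_assoc]
    exact mul_le_of_le_one_left hL hn_mul_le
  calc (Nat.card {a : Fin n → ℕ // ∑ i, a i ≤ k} : ℝ)
      = ((n + k).choose k : ℝ) := by rw [natCard_sum_le_eq_choose]
    _ ≤ 2 ^ ((n : ℝ) * gthermal (k / n)) := choose_le_two_rpow_mul_gthermal hn hk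
    _ ≤ 2 ^ ((n : ℝ) * (gthermal NS + δ)) := by
      refine rpow_le_rpow_of_exponent_le one_le_two ?_
      rw [mul_add] at hg ⊢
      linarith
end

section
/- Let p(l|k) = ∑_{m=0}^{k} ∑_{j=0}^{min(l,m)} C(k,m)·η^m·(1−η)^{k−m}·C(l,j)·C(m,j)·((1−η)N_B)^{m+l−2j}/(1+(1−η)N_B)^{m+l+1} for 0 < η < 1 and N_B ≥ 0. Then for every fixed nonnegative integer k, the function l ↦ p(l|k) is a probability distribution on the nonnegative integers with mean ∑_l l·p(l|k) = η·k + (1−η)·N_B. -/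
/-!
Write `N = (1 - η) N_B`. Then `p(·|k) = ∑_m C(k,m) η^m (1-η)^(k-m) λ^{(m)}` is a binomial mixture
of the noise kernels, so it suffices that each `λ^{(m)}` is a probability distribution with mean
`m + N`; the binomial weights have total mass `1` and mean `η k`.

For `j ≤ m` the `j`-th summand of `λ_l^{(m)}` vanishes for `l < j`, and for `l = i + j` it is a
constant multiple of `C(i+j, j) x^i` with `x = N / (1 + N)`. The negative binomial series
`∑_i C(i+j, j) x^i = (1 - x)^{-(j+1)}` sums it, and `(i+j+1) C(i+j, j) = (j+1) C(i+j+1, j+1)`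
reduces the first moment to the same series with `j + 1`. What is left are finite binomial sums.
-/

open Finset

section BinomialSums

variable {R : Type*}

theorem sum_range_mul_choose_mul_pow_mul_pow [CommSemiring R] (x y : R) (n : ℕ) :
    ∑ j ∈ range (n + 1), (j : R) * n.choose j * x ^ j * y ^ (n - j) =
      n * x * (x + y) ^ (n - 1) := by
  cases n with
  | zero => simp
  | succ n =>
    rw [sum_range_succ', add_pow, mul_sum]
    simp only [Nat.cast_zero, zero_mul, add_zero, add_tsub_cancel_right, Nat.add_sub_add_right]
    refine sum_congr rfl fun j _ => ?_
    have h := congrArg (Nat.cast (R := R)) (Nat.add_one_mul_choose_eq n j)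
    push_cast at h ⊢
    calc (j + 1 : R) * (n + 1).choose (j + 1) * x ^ (j + 1) * y ^ (n - j)
        = ((n + 1).choose (j + 1) * (j + 1)) * x * (x ^ j * y ^ (n - j)) := by ring
      _ = _ := by rw [← h]; ring

theorem sum_range_choose_mul_pow [CommSemiring R] (x : R) (n : ℕ) :
    ∑ j ∈ range (n + 1), (n.choose j : R) * x ^ (n - j) = (1 + x) ^ n := by
  simp [add_pow, mul_comm]

theorem sum_range_choose_mul_pow_mul_one_sub_pow [CommRing R] (q : R) (n : ℕ) :
    ∑ m ∈ range (n + 1), (n.choose m : R) * q ^ m * (1 - q) ^ (n - m) = 1 := by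
  simpa [add_pow, mul_comm, mul_assoc, mul_left_comm] using (add_pow q (1 - q) n).symm

theorem sum_range_mul_choose_mul_pow_mul_one_sub_pow [CommRing R] (q : R) (n : ℕ) :
    ∑ m ∈ range (n + 1), (n.choose m : R) * q ^ m * (1 - q) ^ (n - m) * m = n * q := by
  have h := sum_range_mul_choose_mul_pow_mul_pow q (1 - q) n
  rw [add_sub_cancel, one_pow, mul_one] at h
  rw [← h]
  exact sum_congr rfl fun _ _ ↦ by ring

end BinomialSums

theorem HasSum.of_nat_add {G : Type*} [AddCommGroup G] [TopologicalSpace G]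
    [IsTopologicalAddGroup G] {f : ℕ → G} {g : G} {k : ℕ} (hf : ∀ i < k, f i = 0) (h : HasSum (fun n ↦ f (n + k)) g) :
    HasSum f g := by
  rwa [hasSum_nat_add_iff, sum_eq_zero fun i hi ↦ hf i (mem_range.mp hi), add_zero] at h

section Geometric

variable {𝕜 : Type*} [NontriviallyNormedField 𝕜]

theorem hasSum_add_mul_choose_mul_geometric_of_norm_lt_one (k : ℕ) {r : 𝕜} (hr : ‖r‖ < 1) :
    HasSum (fun n ↦ ((n + k : ℕ) : 𝕜) * (n + k).choose k * r ^ n)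
      ((k + 1) / (1 - r) ^ (k + 2) - 1 / (1 - r) ^ (k + 1)) := by
  have h := ((hasSum_choose_mul_geometric_of_norm_lt_one (k + 1) hr).mul_left ((k : 𝕜) + 1)).sub
    (hasSum_choose_mul_geometric_of_norm_lt_one k hr)
  rw [mul_one_div] at h
  refine h.congr_fun fun n ↦ ?_
  have hc := congrArg (Nat.cast (R := 𝕜)) (Nat.add_one_mul_choose_eq (n + k) k)
  rw [add_assoc n k 1] at hc
  push_cast at hc ⊢
  linear_combination r ^ n * hc

end Geometric

section OnePlus

variable {N : ℝ}

theorem pow_div_pow_add (hN : 1 + N ≠ 0) {m j : ℕ} (hj : j ≤ m) (i : ℕ) :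
    N ^ (m + (i + j) - 2 * j) / (1 + N) ^ (m + (i + j) + 1) =
      N ^ (m - j) / (1 + N) ^ (m + j + 1) * (N / (1 + N)) ^ i := by
  rw [show m + (i + j) - 2 * j = m - j + i by omega, show m + (i + j) + 1 = m + j + 1 + i by omega,
    pow_add, pow_add, div_pow]
  field_simp

theorem norm_div_one_add_lt_one (hN : 0 ≤ N) : ‖N / (1 + N)‖ < 1 := by
  rw [Real.norm_of_nonneg (by positivity), div_lt_one (by positivity)]
  linarith

theorem one_sub_div_one_add (hN : 1 + N ≠ 0) : 1 - N / (1 + N) = (1 + N)⁻¹ := by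
  field_simp
  ring

end OnePlus

/-- The kernel `λ_l^{(m)}`: the photon-number distribution of the additive noise channel with
variance `N` applied to the number state `|m⟩`. -/
noncomputable def noiseKernel (N : ℝ) (m l : ℕ) : ℝ :=
  ∑ j ∈ range (min l m + 1),
    (l.choose j : ℝ) * m.choose j * N ^ (m + l - 2 * j) / (1 + N) ^ (m + l + 1)

namespace noiseKernel

variable {N : ℝ} {m j : ℕ}

theorem nonneg (hN : 0 ≤ N) (m l : ℕ) : 0 ≤ noiseKernel N m l :=
  sum_nonneg fun _ _ ↦ by positivity

theorem eq_sum_range (N : ℝ) (m l : ℕ) :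
    noiseKernel N m l = ∑ j ∈ range (m + 1),
      (m.choose j : ℝ) * ((l.choose j : ℝ) * N ^ (m + l - 2 * j) / (1 + N) ^ (m + l + 1)) := by
  rw [noiseKernel]
  refine (sum_subset (range_subset_range.mpr (by omega)) fun j hjm hjl ↦ ?_).trans
    (sum_congr rfl fun _ _ ↦ by ring)
  simp only [mem_range, not_lt] at hjm hjl
  rw [Nat.choose_eq_zero_of_lt (by omega : l < j)]
  simp

theorem hasSum_choose_mul_pow_div_pow (hN : 0 ≤ N) (hj : j ≤ m) :
    HasSum (fun l : ℕ ↦ (l.choose j : ℝ) * N ^ (m + l - 2 * j) / (1 + N) ^ (m + l + 1))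
      (N ^ (m - j) / (1 + N) ^ m) := by
  have hN' : 1 + N ≠ 0 := by positivity
  refine .of_nat_add (k := j) (fun i hi ↦ by simp [Nat.choose_eq_zero_of_lt hi]) ?_
  have h := (hasSum_choose_mul_geometric_of_norm_lt_one j (norm_div_one_add_lt_one hN)).mul_left
    (N ^ (m - j) / (1 + N) ^ (m + j + 1))
  have hval : N ^ (m - j) / (1 + N) ^ (m + j + 1) * (1 / (1 - N / (1 + N)) ^ (j + 1)) =
      N ^ (m - j) / (1 + N) ^ m := by
    rw [one_sub_div_one_add hN', show m + j + 1 = m + (j + 1) by omega, pow_add]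
    simp only [inv_pow, div_inv_eq_mul]
    field_simp
  rw [hval] at h
  refine h.congr_fun fun i ↦ ?_
  rw [mul_div_assoc, pow_div_pow_add hN' hj]
  ring

theorem hasSum_mul_choose_mul_pow_div_pow (hN : 0 ≤ N) (hj : j ≤ m) :
    HasSum (fun l : ℕ ↦ (l : ℝ) * ((l.choose j : ℝ) * N ^ (m + l - 2 * j) / (1 + N) ^ (m + l + 1)))
      ((N + j * (1 + N)) * N ^ (m - j) / (1 + N) ^ m) := by
  have hN' : 1 + N ≠ 0 := by positivity
  refine .of_nat_add (k := j) (fun i hi ↦ by simp [Nat.choose_eq_zero_of_lt hi]) ?_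
  have h := (hasSum_add_mul_choose_mul_geometric_of_norm_lt_one j
    (norm_div_one_add_lt_one hN)).mul_left (N ^ (m - j) / (1 + N) ^ (m + j + 1))
  have hval : N ^ (m - j) / (1 + N) ^ (m + j + 1) *
      ((j + 1) / (1 - N / (1 + N)) ^ (j + 2) - 1 / (1 - N / (1 + N)) ^ (j + 1)) =
      (N + j * (1 + N)) * N ^ (m - j) / (1 + N) ^ m := by
    rw [one_sub_div_one_add hN', show m + j + 1 = m + (j + 1) by omega, pow_add]
    simp only [inv_pow, div_inv_eq_mul]
    field_simp
    ring
  rw [hval] at h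
  refine h.congr_fun fun i ↦ ?_
  rw [mul_div_assoc, pow_div_pow_add hN' hj]
  push_cast
  ring

theorem hasSum (hN : 0 ≤ N) (m : ℕ) : HasSum (noiseKernel N m) 1 := by
  have h := hasSum_sum fun j (hj : j ∈ range (m + 1)) ↦
    (hasSum_choose_mul_pow_div_pow hN (Nat.lt_succ_iff.mp (mem_range.mp hj))).mul_left
      (m.choose j : ℝ)
  have hval : ∑ j ∈ range (m + 1), (m.choose j : ℝ) * (N ^ (m - j) / (1 + N) ^ m) = 1 := by
    have : (1 + N) ^ m ≠ 0 := by positivity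
    simp_rw [← mul_div_assoc, ← sum_div, div_eq_one_iff_eq this, sum_range_choose_mul_pow]
  rw [hval] at h
  exact h.congr_fun (eq_sum_range N m)

theorem hasSum_mul (hN : 0 ≤ N) (m : ℕ) : HasSum (fun l : ℕ ↦ l * noiseKernel N m l) (m + N) := by
  have h := hasSum_sum fun j (hj : j ∈ range (m + 1)) ↦
    (hasSum_mul_choose_mul_pow_div_pow hN (Nat.lt_succ_iff.mp (mem_range.mp hj))).mul_left
      (m.choose j : ℝ)
  have hval : ∑ j ∈ range (m + 1),
      (m.choose j : ℝ) * ((N + j * (1 + N)) * N ^ (m - j) / (1 + N) ^ m) = m + N := by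
    have : (1 + N) ^ m ≠ 0 := by positivity
    simp_rw [← mul_div_assoc, ← sum_div, div_eq_iff this]
    calc ∑ j ∈ range (m + 1), (m.choose j : ℝ) * ((N + j * (1 + N)) * N ^ (m - j))
        = N * ∑ j ∈ range (m + 1), (m.choose j : ℝ) * N ^ (m - j) + (1 + N) *
            ∑ j ∈ range (m + 1), (j : ℝ) * m.choose j * 1 ^ j * N ^ (m - j) := by
          rw [mul_sum, mul_sum, ← sum_add_distrib]
          exact sum_congr rfl fun _ _ ↦ by ring
      _ = (m + N) * (1 + N) ^ m := by
          rw [sum_range_choose_mul_pow, sum_range_mul_choose_mul_pow_mul_pow]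
          cases m with
          | zero => simp
          | succ m =>
            push_cast
            ring
  rw [hval] at h
  refine h.congr_fun fun l ↦ ?_
  rw [eq_sum_range, mul_sum]
  exact sum_congr rfl fun _ _ ↦ by ring

end noiseKernel

/-- The photon-number distribution at the output of the thermal noise
channel `E_{η,N_B}` given a photon-number-state input `|k⟩`:
`p(l|k) = ∑_{m=0}^{k} ∑_{j=0}^{min(l,m)} C(k,m) η^m (1−η)^{k−m} C(l,j) C(m,j)
  ((1−η)N_B)^{m+l−2j} / (1+(1−η)N_B)^{m+l+1}`.
For every fixed `k`, `l ↦ p(l|k)` is a probability distribution on `ℕ` with mean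
`η k + (1−η) N_B`. -/
theorem thermal_channel_number_state_output_distribution
    (η NB : ℝ) (hη : 0 < η) (hη1 : η < 1) (hNB : 0 ≤ NB) (k : ℕ)
    (p : ℕ → ℝ)
    (hp : ∀ l, p l = ∑ m ∈ Finset.range (k + 1), ∑ j ∈ Finset.range (min l m + 1),
        (k.choose m : ℝ) * η ^ m * (1 - η) ^ (k - m) *
        (l.choose j : ℝ) * (m.choose j : ℝ) *
        ((1 - η) * NB) ^ (m + l - 2 * j) / (1 + (1 - η) * NB) ^ (m + l + 1)) :
    (∀ l, 0 ≤ p l) ∧ (∑' l, p l = 1) ∧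
    (∑' l : ℕ, (l : ℝ) * p l = η * k + (1 - η) * NB) := by
  set N := (1 - η) * NB
  have hN : 0 ≤ N := mul_nonneg (by linarith) hNB
  set a : ℕ → ℝ := fun m ↦ k.choose m * η ^ m * (1 - η) ^ (k - m)
  obtain rfl : p = fun l ↦ ∑ m ∈ range (k + 1), a m * noiseKernel N m l := by
    funext l
    simp_rw [hp l, noiseKernel, mul_sum]
    exact sum_congr rfl fun _ _ ↦ sum_congr rfl fun _ _ ↦ by ring
  have hmass := hasSum_sum fun m (_ : m ∈ range (k + 1)) ↦ (noiseKernel.hasSum hN m).mul_left (a m)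
  have hmean := hasSum_sum fun m (_ : m ∈ range (k + 1)) ↦
    (noiseKernel.hasSum_mul hN m).mul_left (a m)
  refine ⟨fun l ↦ sum_nonneg fun m _ ↦ mul_nonneg ?_ (noiseKernel.nonneg hN m l), ?_, ?_⟩
  · have : 0 ≤ 1 - η := by linarith
    positivity
  · simpa only [a, mul_one, sum_range_choose_mul_pow_mul_one_sub_pow] using hmass.tsum_eq
  · refine (hmean.congr_fun fun l ↦ ?_).tsum_eq.trans ?_
    · rw [mul_sum]
      exact sum_congr rfl fun _ _ ↦ by ring
    · simp only [a, mul_add, sum_add_distrib, ← sum_mul, sum_range_choose_mul_pow_mul_one_sub_pow,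
        sum_range_mul_choose_mul_pow_mul_one_sub_pow]
      ring
end

section
/- Let λ_l = ∑_{j=0}^{min(l,m)} C(l,j)·C(m,j)·n̄^{m+l−2j}/(1+n̄)^{m+l+1} for a fixed nonnegative integer m and n̄ > 0. Then λ is a probability distribution on the nonnegative integers with mean ∑_l l·λ_l = m + n̄. -/
/-!
With `p = 1 / (1 + n̄)` one has `n̄ / (1 + n̄) = 1 - p`, and each summand of `λ_l` factors as
`C(m,j) p^j (1-p)^(m-j) · C(l,j) (1-p)^(l-j) p^(j+1)`: the output distribution is a mixture,
with binomial weights `Bin(m, p)(j)`, of the negative binomial laws of the number of trials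
before the `(j+1)`-st success. Each of these sums to `1` and has mean `(j + 1 - p) / p`;
averaging over `j` gives mean `(m p + 1 - p) / p = m + n̄`.
-/

open Finset Polynomial

/-- The probability that, in independent trials with success probability `p`, exactly `l` trials
precede the `(j+1)`-st success. -/
def negBinomialWeight {R : Type*} [Ring R] (p : R) (j l : ℕ) : R :=
  l.choose j * (1 - p) ^ (l - j) * p ^ (j + 1)

section Bernstein

variable {R : Type*} [CommRing R]

theorem eval_bernsteinPolynomial (m j : ℕ) (p : R) :
    (bernsteinPolynomial R m j).eval p = m.choose j * p ^ j * (1 - p) ^ (m - j) := by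
  simp [bernsteinPolynomial]

theorem sum_eval_bernsteinPolynomial (m : ℕ) (p : R) :
    ∑ j ∈ range (m + 1), (bernsteinPolynomial R m j).eval p = 1 := by
  rw [← eval_finsetSum, bernsteinPolynomial.sum, eval_one]

theorem sum_natCast_mul_eval_bernsteinPolynomial (m : ℕ) (p : R) :
    ∑ j ∈ range (m + 1), (j : R) * (bernsteinPolynomial R m j).eval p = m * p := by
  simpa [eval_finsetSum, nsmul_eq_mul] using
    congrArg (eval p) (bernsteinPolynomial.sum_smul (R := R) m)

end Bernstein

section NegativeBinomial

variable {𝕜 : Type*} [NormedField 𝕜]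

theorem ne_zero_of_norm_one_sub_lt_one {p : 𝕜} (hp : ‖1 - p‖ < 1) : p ≠ 0 := by
  rintro rfl
  simp at hp

theorem hasSum_choose_mul_pow_sub (j : ℕ) {x : 𝕜} (hx : ‖x‖ < 1) :
    HasSum (fun l : ℕ => (l.choose j : 𝕜) * x ^ (l - j)) (1 / (1 - x) ^ (j + 1)) := by
  have hvanish : ∑ l ∈ range j, (l.choose j : 𝕜) * x ^ (l - j) = 0 :=
    sum_eq_zero fun l hl => by simp [Nat.choose_eq_zero_of_lt (mem_range.mp hl)]
  rw [← hasSum_nat_add_iff' j, hvanish, sub_zero]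
  simpa using hasSum_choose_mul_geometric_of_norm_lt_one j hx

theorem natCast_mul_choose_mul_pow_sub (x : 𝕜) (l j : ℕ) :
    (l : 𝕜) * l.choose j * x ^ (l - j) =
      (j + 1) * x * (l.choose (j + 1) * x ^ (l - (j + 1))) + j * (l.choose j * x ^ (l - j)) := by
  rcases lt_or_ge j l with hjl | hlj
  · obtain ⟨k, rfl⟩ := Nat.exists_eq_add_of_lt hjl
    have hchoose : ((j + k + 1).choose (j + 1) : 𝕜) * (j + 1) = (j + k + 1).choose j * (k + 1) := by
      have h := Nat.choose_succ_right_eq (j + k + 1) j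
      rw [show j + k + 1 - j = k + 1 by omega] at h
      exact_mod_cast congrArg (Nat.cast : ℕ → 𝕜) h
    rw [show j + k + 1 - j = k + 1 by omega, show j + k + 1 - (j + 1) = k by omega]
    push_cast
    linear_combination -(x ^ k * x) * hchoose
  · rw [Nat.choose_eq_zero_of_lt (Nat.lt_succ_of_le hlj)]
    rcases hlj.lt_or_eq with hlj | rfl
    · simp [Nat.choose_eq_zero_of_lt hlj]
    · ring

theorem hasSum_natCast_mul_choose_mul_pow_sub (j : ℕ) {x : 𝕜} (hx : ‖x‖ < 1) :
    HasSum (fun l : ℕ => (l : 𝕜) * l.choose j * x ^ (l - j)) ((j + x) / (1 - x) ^ (j + 2)) := by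
  have hx1 : 1 - x ≠ 0 := ne_zero_of_norm_one_sub_lt_one (by rwa [sub_sub_cancel])
  have h := ((hasSum_choose_mul_pow_sub (j + 1) hx).mul_left ((j + 1) * x)).add
    ((hasSum_choose_mul_pow_sub j hx).mul_left (j : 𝕜))
  have hsum : (j + x) / (1 - x) ^ (j + 2) =
      (j + 1) * x * (1 / (1 - x) ^ (j + 1 + 1)) + j * (1 / (1 - x) ^ (j + 1)) := by
    field_simp
    ring
  rw [hsum, funext fun l => natCast_mul_choose_mul_pow_sub x l j]
  exact h

theorem hasSum_negBinomialWeight (j : ℕ) {p : 𝕜} (hp : ‖1 - p‖ < 1) :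
    HasSum (negBinomialWeight p j) 1 := by
  have h := (hasSum_choose_mul_pow_sub j hp).mul_right (p ^ (j + 1))
  rwa [sub_sub_cancel, one_div_mul_cancel (pow_ne_zero _ (ne_zero_of_norm_one_sub_lt_one hp))] at h

theorem hasSum_natCast_mul_negBinomialWeight (j : ℕ) {p : 𝕜} (hp : ‖1 - p‖ < 1) :
    HasSum (fun l : ℕ => l * negBinomialWeight p j l) ((j + 1 - p) / p) := by
  have hp0 := ne_zero_of_norm_one_sub_lt_one hp
  have h := (hasSum_natCast_mul_choose_mul_pow_sub j hp).mul_right (p ^ (j + 1))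
  have hmean : (j + 1 - p) / p = (j + (1 - p)) / (1 - (1 - p)) ^ (j + 2) * p ^ (j + 1) := by
    rw [sub_sub_cancel]
    field_simp
    ring
  simpa only [hmean, negBinomialWeight, ← mul_assoc] using h

theorem hasSum_sum_bernstein_mul_negBinomialWeight (m : ℕ) {p : 𝕜} (hp : ‖1 - p‖ < 1) :
    HasSum (fun l : ℕ => ∑ j ∈ range (m + 1),
      (bernsteinPolynomial 𝕜 m j).eval p * negBinomialWeight p j l) 1 := by
  rw [← sum_eval_bernsteinPolynomial m p]
  refine hasSum_sum fun j _ => ?_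
  simpa using (hasSum_negBinomialWeight j hp).mul_left ((bernsteinPolynomial 𝕜 m j).eval p)

theorem hasSum_natCast_mul_sum_bernstein_mul_negBinomialWeight (m : ℕ) {p : 𝕜}
    (hp : ‖1 - p‖ < 1) :
    HasSum (fun l : ℕ => l * ∑ j ∈ range (m + 1),
      (bernsteinPolynomial 𝕜 m j).eval p * negBinomialWeight p j l) (m + (1 - p) / p) := by
  have hp0 := ne_zero_of_norm_one_sub_lt_one hp
  have hmean : ∑ j ∈ range (m + 1), (bernsteinPolynomial 𝕜 m j).eval p * ((j + 1 - p) / p) =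
      m + (1 - p) / p := by
    have hterm : ∀ j ∈ range (m + 1), (bernsteinPolynomial 𝕜 m j).eval p * ((j + 1 - p) / p) =
        (j * (bernsteinPolynomial 𝕜 m j).eval p + (bernsteinPolynomial 𝕜 m j).eval p * (1 - p)) / p :=
      fun j _ => by ring
    rw [sum_congr rfl hterm, ← sum_div, sum_add_distrib, ← sum_mul,
      sum_natCast_mul_eval_bernsteinPolynomial, sum_eval_bernsteinPolynomial]
    field_simp
  rw [← hmean]
  simp only [mul_sum]
  refine hasSum_sum fun j _ => ?_
  simpa only [mul_left_comm] using
    (hasSum_natCast_mul_negBinomialWeight j hp).mul_left ((bernsteinPolynomial 𝕜 m j).eval p)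

end NegativeBinomial

section Mixture

variable {K : Type*} [Field K] {t : K}

theorem choose_mul_choose_mul_pow_div_eq_bernstein_mul_negBinomialWeight (ht : 1 + t ≠ 0)
    {l m j : ℕ} (hjl : j ≤ l) (hjm : j ≤ m) :
    (l.choose j : K) * m.choose j * t ^ (m + l - 2 * j) / (1 + t) ^ (m + l + 1) =
      (bernsteinPolynomial K m j).eval (1 + t)⁻¹ * negBinomialWeight (1 + t)⁻¹ j l := by
  have hq : 1 - (1 + t)⁻¹ = t * (1 + t)⁻¹ := by field_simp; ring
  obtain ⟨a, rfl⟩ := Nat.exists_eq_add_of_le hjm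
  obtain ⟨b, rfl⟩ := Nat.exists_eq_add_of_le hjl
  rw [eval_bernsteinPolynomial, negBinomialWeight, hq, show j + a + (j + b) - 2 * j = a + b by omega,
    Nat.add_sub_cancel_left, Nat.add_sub_cancel_left, div_eq_mul_inv, ← inv_pow, mul_pow, mul_pow]
  ring

theorem sum_choose_mul_choose_mul_pow_div_eq_sum_bernstein_mul_negBinomialWeight
    (ht : 1 + t ≠ 0) (l m : ℕ) :
    ∑ j ∈ range (min l m + 1),
        (l.choose j : K) * m.choose j * t ^ (m + l - 2 * j) / (1 + t) ^ (m + l + 1) =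
      ∑ j ∈ range (m + 1),
        (bernsteinPolynomial K m j).eval (1 + t)⁻¹ * negBinomialWeight (1 + t)⁻¹ j l := by
  rw [sum_subset (range_subset_range.2 (by omega : min l m + 1 ≤ m + 1))]
  · refine sum_congr rfl fun j hj => ?_
    rcases le_or_gt j l with hjl | hlj
    · exact choose_mul_choose_mul_pow_div_eq_bernstein_mul_negBinomialWeight ht hjl
        (Nat.lt_succ_iff.1 (mem_range.1 hj))
    · simp [negBinomialWeight, Nat.choose_eq_zero_of_lt hlj]
  · intro j hjm hj
    rw [mem_range] at hjm hj
    simp [Nat.choose_eq_zero_of_lt (by omega : l < j)]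

end Mixture

/-- The photon-number distribution of the output of the additive noise
channel with noise variance `n̄ > 0` applied to the photon number state `|m⟩`:
`λ_l = ∑_{j=0}^{min(l,m)} C(l,j) C(m,j) n̄^{m+l−2j} / (1+n̄)^{m+l+1}`.
It is a probability distribution on `ℕ` with mean `m + n̄`. -/
theorem additive_noise_number_state_output_distribution
    (nbar : ℝ) (hnbar : 0 < nbar) (m : ℕ)
    (lam : ℕ → ℝ)
    (hlam : ∀ l, lam l = ∑ j ∈ Finset.range (min l m + 1),
        (l.choose j : ℝ) * (m.choose j : ℝ) *
        nbar ^ (m + l - 2 * j) / (1 + nbar) ^ (m + l + 1)) :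
    (∀ l, 0 ≤ lam l) ∧ (∑' l, lam l = 1) ∧
    (∑' l : ℕ, (l : ℝ) * lam l = (m : ℝ) + nbar) := by
  have hnbar1 : 1 + nbar ≠ 0 := by positivity
  have hp : ‖1 - (1 + nbar)⁻¹‖ < 1 := by
    have hp1 : (1 + nbar)⁻¹ < 1 := inv_lt_one_of_one_lt₀ (by linarith)
    have hp0 : 0 < (1 + nbar)⁻¹ := by positivity
    rw [Real.norm_eq_abs, abs_lt]
    constructor <;> linarith
  have hodds : (1 - (1 + nbar)⁻¹) / (1 + nbar)⁻¹ = nbar := by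
    field_simp
    ring
  have hmix : lam = fun l => ∑ j ∈ range (m + 1),
      (bernsteinPolynomial ℝ m j).eval (1 + nbar)⁻¹ * negBinomialWeight (1 + nbar)⁻¹ j l :=
    funext fun l =>
      (hlam l).trans (sum_choose_mul_choose_mul_pow_div_eq_sum_bernstein_mul_negBinomialWeight
        hnbar1 l m)
  refine ⟨fun l => ?_, ?_, ?_⟩
  · rw [hlam l]
    positivity
  · rw [hmix, (hasSum_sum_bernstein_mul_negBinomialWeight m hp).tsum_eq]
  · rw [hmix, (hasSum_natCast_mul_sum_bernstein_mul_negBinomialWeight m hp).tsum_eq, hodds]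
end
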